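/- Let p : X → B be a fibration of path-connected spaces with path-connected fiber F = p⁻¹(b), π₂(B) trivial, and suppose p admits a continuous section s : B → X with s(b) = x. Then π₁(X,x) is isomorphic to the semidirect product π₁(B,b) ⋉ π₁(F,x). -/

import Mathlib

open scoped Topology unitInterval
open CategoryTheory

/-- A (Hurewicz) fibration: a continuous map satisfying the homotopy lifting
property with respect to all topological spaces. -/
def IsFibration {X B : Type*} [TopologicalSpace X] [TopologicalSpace B] (p : X → B) : Prop :=
  Continuous p ∧
    ∀ (Y : Type) [TopologicalSpace Y] (H : Y × I → B) (h : Y → X),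
      Continuous H → Continuous h → (∀ y, p (h y) = H (y, 0)) →
        ∃ G : Y × I → X, Continuous G ∧ (∀ y, G (y, 0) = h y) ∧ ∀ q, p (G q) = H q

/-- The homomorphism on fundamental groups induced by a continuous map. -/
noncomputable def indHom {X Y : Type u} [TopologicalSpace X] [TopologicalSpace Y]
    (f : C(X, Y)) (x : X) : FundamentalGroup X x →* FundamentalGroup Y (f x) :=
  Functor.mapEnd (FundamentalGroupoid.mk x)
    (FundamentalGroupoid.fundamentalGroupoidFunctor.map (X := TopCat.of X) (Y := TopCat.of Y) (TopCat.ofHom f))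

/-!
The fibre inclusion and the projection give a short exact sequence
`1 → π₁(F, x) → π₁(X, x) → π₁(B, b) → 1`, which `s` splits; a split extension is a semidirect
product.

Exactness in the middle: if `p ∘ γ` is null-homotopic, lift the null-homotopy starting at `γ`;
three edges of the lifted square lie in `F` and express `γ` as a loop in `F`.

Injectivity: if a loop `δ` in `F` bounds a disc `H` in `X`, then `p ∘ H` is a map of the square
sending its boundary to `b`, hence null-homotopic relative to the boundary because `π₂(B, b)` is
trivial. Lifting that null-homotopy starting at `H` gives a cube whose faces other than `H` lie in
`F`, and these contract `δ` inside `F`.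
-/

open unitInterval (path01)

instance : ContractibleSpace I :=
  (convex_Icc (0 : ℝ) 1).contractibleSpace ⟨0, by simp⟩

theorem Path.Homotopic.Quotient.trans_right_cancel {Y : Type*} [TopologicalSpace Y] {x y z : Y}
    {p q : Path.Homotopic.Quotient x y} {c : Path.Homotopic.Quotient y z}
    (h : p.trans c = q.trans c) : p = q := by
  simpa using congrArg (·.trans c.symm) h

theorem Path.trans_apply_congr {Y : Type*} [TopologicalSpace Y] {a b c a' b' c' : Y}
    {γ₁ : Path a b} {γ₂ : Path b c} {γ₁' : Path a' b'} {γ₂' : Path b' c'}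
    (h₁ : ∀ s, γ₁ s = γ₁' s) (h₂ : ∀ s, γ₂ s = γ₂' s) (s : I) :
    γ₁.trans γ₂ s = γ₁'.trans γ₂' s := by
  simp only [Path.trans_apply, h₁, h₂]

theorem Path.Homotopic.of_square {Y : Type*} [TopologicalSpace Y] (sq : C(I × I, Y))
    {v₀₀ v₀₁ v₁₀ v₁₁ : Y} (l : Path v₀₀ v₀₁) (t : Path v₀₁ v₁₁) (b : Path v₀₀ v₁₀)
    (r : Path v₁₀ v₁₁) (hl : ∀ s, l s = sq (0, s)) (ht : ∀ s, t s = sq (s, 1))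
    (hb : ∀ s, b s = sq (s, 0)) (hr : ∀ s, r s = sq (1, s)) :
    (l.trans t).Homotopic (b.trans r) := by
  obtain rfl : v₀₀ = sq (0, 0) := by simpa using hl 0
  obtain rfl : v₀₁ = sq (0, 1) := by simpa using hl 1
  obtain rfl : v₁₀ = sq (1, 0) := by simpa using hb 1
  obtain rfl : v₁₁ = sq (1, 1) := by simpa using ht 1
  have := (SimplyConnectedSpace.paths_homotopic
    (((Path.refl 0).prod path01).trans (path01.prod (Path.refl 1)))
    ((path01.prod (Path.refl 0)).trans ((Path.refl 1).prod path01))).map sq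
  convert this using 1 <;> rw [Path.map_trans] <;> congr 1 <;> ext s <;>
    simp [hl, ht, hb, hr] <;> rfl

def squareBoundary : Set (I × I) := {q | q.1 = 0 ∨ q.1 = 1 ∨ q.2 = 0 ∨ q.2 = 1}

noncomputable def squareBoundaryLoop : Path ((0, 0) : I × I) (0, 0) :=
  (((Path.refl 0).prod path01).trans (path01.prod (Path.refl 1))).trans
    ((path01.prod (Path.refl 0)).trans ((Path.refl 1).prod path01)).symm

theorem squareBoundaryLoop_mem (u : I) : squareBoundaryLoop u ∈ squareBoundary := by
  simp only [squareBoundaryLoop, Path.trans_symm, Path.trans_apply, Path.symm_apply]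
  split_ifs <;> simp [squareBoundary]

/-- The bottom face need not lie in `S`: the side faces are a free homotopy in `S` from its boundary
loop to that of the top face, which the top face contracts. -/
theorem Path.Homotopic.of_cube {Y : Type*} [TopologicalSpace Y] {S : Set Y}
    (G : C((I × I) × I, Y)) (hside : ∀ q ∈ squareBoundary, ∀ r, G (q, r) ∈ S)
    (htop : ∀ q, G (q, 1) ∈ S) {v₀₀ v₀₁ v₁₀ v₁₁ : S} (l : Path v₀₀ v₀₁) (t : Path v₀₁ v₁₁)
    (b : Path v₀₀ v₁₀) (r : Path v₁₀ v₁₁) (hl : ∀ s, (l s : Y) = G ((0, s), 0))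
    (ht : ∀ s, (t s : Y) = G ((s, 1), 0)) (hb : ∀ s, (b s : Y) = G ((s, 0), 0))
    (hr : ∀ s, (r s : Y) = G ((1, s), 0)) :
    (l.trans t).Homotopic (b.trans r) := by
  let β := squareBoundaryLoop
  let γ := (l.trans t).trans (b.trans r).symm
  have hγ : ∀ s, (γ s : Y) = G (β s, 0) := by
    intro s
    let g₀ : C(I × I, Y) := G.comp ⟨fun q ↦ (q, 0), by fun_prop⟩
    change γ.map continuous_subtype_val s = β.map g₀.continuous s
    simp only [γ, β, squareBoundaryLoop, Path.trans_symm, Path.map_trans, ← Path.map_symm]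
    refine Path.trans_apply_congr (Path.trans_apply_congr ?_ ?_) (Path.trans_apply_congr ?_ ?_) s
      <;> intro s <;> simp [Path.symm_apply, hl, ht, hb, hr, g₀] <;> rfl
  let sides : C(I × I, S) :=
    ⟨fun z ↦ ⟨G (β z.2, z.1), hside _ (squareBoundaryLoop_mem z.2) z.1⟩, by fun_prop⟩
  let top : C(I × I, S) := ⟨fun q ↦ ⟨G (q, 1), htop q⟩, by fun_prop⟩
  let corner : Path v₀₀ (top (0, 0)) :=
    ⟨⟨fun r ↦ ⟨G ((0, 0), r), hside _ (Or.inl rfl) r⟩, by fun_prop⟩,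
      Subtype.ext (by simpa using (hl 0).symm), rfl⟩
  have hsides : (γ.trans corner).Homotopic (corner.trans (β.map top.continuous)) :=
    .of_square sides _ _ _ _ (fun s ↦ Subtype.ext (hγ s))
      (fun s ↦ Subtype.ext (by simp [sides, corner, β]))
      (fun s ↦ Subtype.ext (by simp [sides, corner, β])) (fun _ ↦ rfl)
  have htop_null : (β.map top.continuous).Homotopic (Path.refl _) :=
    (SimplyConnectedSpace.paths_homotopic β (Path.refl _)).map top
  rw [← Quotient.eq] at hsides htop_null ⊢
  simp only [Quotient.mk_trans, htop_null, Quotient.mk_refl, Quotient.trans_refl] at hsides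
  have hγ_null : Quotient.mk γ = Quotient.refl v₀₀ :=
    Quotient.trans_right_cancel (hsides.trans (Quotient.refl_trans _).symm)
  exact Quotient.trans_right_cancel (c := (Quotient.mk (b.trans r)).symm)
    (hγ_null.trans (Quotient.trans_symm _).symm)

theorem exists_nullhomotopy_of_subsingleton_homotopyGroup_two {B : Type*} [TopologicalSpace B]
    {b : B} [Subsingleton (π_ 2 B b)] (f : C(I × I, B)) (hf : ∀ q ∈ squareBoundary, f q = b) :
    ∃ K : C((I × I) × I, B), (∀ q, K (q, 0) = f q) ∧ (∀ q, K (q, 1) = b) ∧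
      ∀ q ∈ squareBoundary, ∀ r, K (q, r) = b := by
  let e := Homeomorph.piFinTwo fun _ ↦ I
  have he : ∀ y, y ∈ Cube.boundary (Fin 2) ↔ e y ∈ squareBoundary := by
    simp [Cube.boundary, squareBoundary, Fin.exists_fin_two, e, or_assoc]
  let g : GenLoop (Fin 2) B b := ⟨f.comp e, fun y hy ↦ hf _ ((he y).1 hy)⟩
  have hg : (Quotient.mk _ g : π_ 2 B b) = Quotient.mk _ GenLoop.const :=
    @Subsingleton.elim (π_ 2 B b) _ _ _
  obtain ⟨K⟩ := Quotient.exact hg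
  refine ⟨⟨fun z ↦ K (z.2, e.symm z.1), by fun_prop⟩, fun q ↦ ?_, fun q ↦ ?_, fun q hq r ↦ ?_⟩
  · simp [g]
  · simp
  · rw [ContinuousMap.coe_mk, K.eq_fst r ((he _).2 (by simpa using hq))]
    simpa [g] using hf q hq

namespace FundamentalGroup

variable {X Y : Type*} [TopologicalSpace X] [TopologicalSpace Y] {x : X} {y : Y}

theorem mapOfEq_mk (f : C(X, Y)) (h : f x = y) (γ : Path x x) :
    mapOfEq f h (.mk γ) = .mk ((γ.map f.continuous).cast h.symm h.symm) :=
  mapOfEq_apply ..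

theorem mapOfEq_mk_eq_one_iff (f : C(X, Y)) (h : f x = y) (γ : Path x x) :
    mapOfEq f h (.mk γ) = 1 ↔ (γ.map f.continuous).Homotopic (Path.refl (f x)) := by
  subst h
  rw [mapOfEq_mk, one_def, ← Path.Homotopic.Quotient.mk_refl, Path.Homotopic.Quotient.eq]
  rfl

theorem mapOfEq_mapOfEq_of_leftInverse (f : C(X, Y)) (g : C(Y, X))
    (hgf : Function.LeftInverse g f) (hf : f x = y) (hg : g y = x) (a : FundamentalGroup X x) :
    mapOfEq g hg (mapOfEq f hf a) = a := by
  obtain ⟨γ, rfl⟩ := Path.Homotopic.Quotient.mk_surjective a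
  rw [mapOfEq_mk, mapOfEq_mk]
  congr 1
  ext t
  simp [hgf _]

end FundamentalGroup

section Fibration

variable {X B : Type*} [TopologicalSpace X] [TopologicalSpace B] {p : X → B} {b : B}

theorem IsFibration.exists_lift (hp : IsFibration p) {Y : Type} [TopologicalSpace Y]
    (H : C(Y × I, B)) (h : C(Y, X)) (hH : ∀ y, p (h y) = H (y, 0)) :
    ∃ G : C(Y × I, X), (∀ y, G (y, 0) = h y) ∧ ∀ z, p (G z) = H z :=
  let ⟨G, hG, hG₀, hpG⟩ := hp.2 Y H h H.continuous h.continuous hH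
  ⟨⟨G, hG⟩, hG₀, hpG⟩

theorem IsFibration.exists_fiber_loop_homotopic (hp : IsFibration p) {x₀ : p ⁻¹' {b}}
    (γ : Path x₀.1 x₀.1) (hγ : (γ.map hp.1).Homotopic (Path.refl (p x₀))) :
    ∃ δ : Path x₀ x₀, γ.Homotopic (δ.map continuous_subtype_val) := by
  obtain ⟨H⟩ := hγ
  obtain ⟨G, hG₀, hpG⟩ := hp.exists_lift (H.toContinuousMap.comp .prodSwap) γ.toContinuousMap
    (by simp)
  have hfib : ∀ s t, (s = 0 ∨ s = 1 ∨ t = 1) → G (s, t) ∈ p ⁻¹' {b} := by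
    rintro s t (rfl | rfl | rfl) <;> simp [hpG] <;> exact x₀.2
  let u : Path x₀ ⟨G (0, 1), hfib 0 1 (.inl rfl)⟩ :=
    ⟨⟨fun t ↦ ⟨G (0, t), hfib 0 t (.inl rfl)⟩, by fun_prop⟩, by simp [hG₀], rfl⟩
  let v : Path x₀ ⟨G (1, 1), hfib 1 1 (.inr (.inl rfl))⟩ :=
    ⟨⟨fun t ↦ ⟨G (1, t), hfib 1 t (.inr (.inl rfl))⟩, by fun_prop⟩, by simp [hG₀], rfl⟩
  let w : Path (⟨G (0, 1), hfib 0 1 (.inl rfl)⟩ : p ⁻¹' {b})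
      ⟨G (1, 1), hfib 1 1 (.inr (.inl rfl))⟩ :=
    ⟨⟨fun s ↦ ⟨G (s, 1), hfib s 1 (.inr (.inr rfl))⟩, by fun_prop⟩, rfl, rfl⟩
  have hsq := Path.Homotopic.of_square (G.comp .prodSwap) γ (v.map continuous_subtype_val)
    (u.map continuous_subtype_val) (w.map continuous_subtype_val) (fun s ↦ by simp [hG₀])
    (fun _ ↦ rfl) (fun _ ↦ rfl) (fun _ ↦ rfl)
  refine ⟨(u.trans w).trans v.symm, ?_⟩
  rw [← Path.Homotopic.Quotient.eq] at hsq ⊢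
  simp only [Path.map_trans, ← Path.map_symm, Path.Homotopic.Quotient.mk_trans,
    Path.Homotopic.Quotient.mk_symm] at hsq ⊢
  rw [← hsq, Path.Homotopic.Quotient.trans_assoc, Path.Homotopic.Quotient.trans_symm,
    Path.Homotopic.Quotient.trans_refl]

theorem IsFibration.homotopic_refl_of_map_val_homotopic_refl (hp : IsFibration p)
    [Subsingleton (π_ 2 B b)] {x₀ : p ⁻¹' {b}} (δ : Path x₀ x₀)
    (hδ : (δ.map continuous_subtype_val).Homotopic (Path.refl x₀.1)) :
    δ.Homotopic (Path.refl x₀) := by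
  obtain ⟨H⟩ := hδ
  have hH : ∀ q ∈ squareBoundary, p (H q) = b := by
    rintro ⟨t, s⟩ (rfl | rfl | rfl | rfl) <;> simp <;> first | exact (δ s).2 | exact x₀.2
  obtain ⟨K, hK₀, hK₁, hK⟩ :=
    exists_nullhomotopy_of_subsingleton_homotopyGroup_two ((⟨p, hp.1⟩ : C(X, B)).comp H) hH
  obtain ⟨G, hG₀, hpG⟩ := hp.exists_lift K H.toContinuousMap fun q ↦ (hK₀ q).symm
  have hcube := Path.Homotopic.of_cube (S := p ⁻¹' {b}) G (fun q hq r ↦ by simp [hpG, hK q hq r])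
    (fun q ↦ by simp [hpG, hK₁]) δ (.refl x₀) (.refl x₀) (.refl x₀) (fun s ↦ by simp [hG₀])
    (fun s ↦ by simp [hG₀]) (fun s ↦ by simp [hG₀]) (fun s ↦ by simp [hG₀])
  exact (Path.Homotopic.trans_refl δ).symm.trans (hcube.trans (.refl_trans _))

theorem IsFibration.injective_map_val (hp : IsFibration p) [Subsingleton (π_ 2 B b)]
    (x₀ : p ⁻¹' {b}) :
    Function.Injective (FundamentalGroup.map ⟨Subtype.val, continuous_subtype_val⟩ x₀) := by
  refine (injective_iff_map_eq_one _).2 fun a ha ↦ ?_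
  obtain ⟨δ, rfl⟩ := Path.Homotopic.Quotient.mk_surjective a
  exact Path.Homotopic.Quotient.eq.2
    (hp.homotopic_refl_of_map_val_homotopic_refl δ (Path.Homotopic.Quotient.eq.1 ha))

theorem IsFibration.range_map_val_eq_ker (hp : IsFibration p) (x₀ : p ⁻¹' {b}) :
    (FundamentalGroup.map ⟨Subtype.val, continuous_subtype_val⟩ x₀).range =
      (FundamentalGroup.mapOfEq ⟨p, hp.1⟩ x₀.2).ker := by
  ext a
  obtain ⟨γ, rfl⟩ := Path.Homotopic.Quotient.mk_surjective a
  constructor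
  · rintro ⟨a, ha⟩
    obtain ⟨δ, rfl⟩ := Path.Homotopic.Quotient.mk_surjective a
    rw [← ha, MonoidHom.mem_ker]
    refine (FundamentalGroup.mapOfEq_mk_eq_one_iff _ _ (δ.map continuous_subtype_val)).2 ?_
    have hconst : (δ.map continuous_subtype_val).map hp.1 = Path.refl (p x₀) := by
      ext t
      exact (δ t).2.trans x₀.2.symm
    exact hconst ▸ Path.Homotopic.refl _
  · intro ha
    obtain ⟨δ, hδ⟩ := hp.exists_fiber_loop_homotopic γ
      ((FundamentalGroup.mapOfEq_mk_eq_one_iff _ _ _).1 ha)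
    exact ⟨.mk δ, (Path.Homotopic.Quotient.eq.2 hδ).symm⟩

noncomputable def IsFibration.fundamentalGroupExtension (hp : IsFibration p)
    [Subsingleton (π_ 2 B b)] (x₀ : p ⁻¹' {b})
    (hsurj : Function.Surjective (FundamentalGroup.mapOfEq ⟨p, hp.1⟩ x₀.2)) :
    GroupExtension (FundamentalGroup (p ⁻¹' {b}) x₀) (FundamentalGroup X x₀)
      (FundamentalGroup B b) where
  inl := FundamentalGroup.map ⟨Subtype.val, continuous_subtype_val⟩ x₀
  rightHom := FundamentalGroup.mapOfEq ⟨p, hp.1⟩ x₀.2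
  inl_injective := hp.injective_map_val x₀
  range_inl_eq_ker_rightHom := hp.range_map_val_eq_ker x₀
  rightHom_surjective := hsurj

end Fibration

theorem fibration_with_section_semidirect_general {X B : Type} [TopologicalSpace X] [TopologicalSpace B]
    (p : X → B) (hp : IsFibration p) (b : B)
    (hπ2 : Subsingleton (π_ 2 B b))
    (x : X) (hx : p x = b)
    (s : B → X) (hs : Continuous s) (hps : ∀ y, p (s y) = y) (hsb : s b = x) :
    ∃ φ : FundamentalGroup B b →*
        MulAut (FundamentalGroup (↥(p ⁻¹' {b})) (⟨x, hx⟩ : p ⁻¹' {b})),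
      Nonempty (FundamentalGroup X x ≃*
        (FundamentalGroup (↥(p ⁻¹' {b})) (⟨x, hx⟩ : p ⁻¹' {b})) ⋊[φ] FundamentalGroup B b) := by
  have hsec : Function.RightInverse (FundamentalGroup.mapOfEq ⟨s, hs⟩ hsb)
      (FundamentalGroup.mapOfEq ⟨p, hp.1⟩ hx) :=
    FundamentalGroup.mapOfEq_mapOfEq_of_leftInverse ⟨s, hs⟩ ⟨p, hp.1⟩ hps _ _
  let splitting : (hp.fundamentalGroupExtension ⟨x, hx⟩ hsec.surjective).Splitting := ⟨_, hsec⟩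
  exact ⟨_, ⟨splitting.semidirectProductMulEquiv.symm⟩⟩

theorem fibration_with_section_semidirect {X B : Type} [TopologicalSpace X] [TopologicalSpace B]
    [PathConnectedSpace X] [PathConnectedSpace B]
    (p : X → B) (hp : IsFibration p) (b : B)
    (hF : IsPathConnected (p ⁻¹' {b}))
    (hπ2 : Subsingleton (π_ 2 B b))
    (x : X) (hx : p x = b)
    (s : B → X) (hs : Continuous s) (hps : ∀ y, p (s y) = y) (hsb : s b = x) :
    ∃ φ : FundamentalGroup B b →*
        MulAut (FundamentalGroup (↥(p ⁻¹' {b})) (⟨x, hx⟩ : p ⁻¹' {b})),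
      Nonempty (FundamentalGroup X x ≃*
        (FundamentalGroup (↥(p ⁻¹' {b})) (⟨x, hx⟩ : p ⁻¹' {b})) ⋊[φ] FundamentalGroup B b) :=
  fibration_with_section_semidirect_general p hp b hπ2 x hx s hs hps hsb
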